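/- The map ζ satisfies the counit conditions: for all a ∈ A and h ∈ H, (ε_H ⊗ id_A)(ζ(a ⊗ h)) = ε_H(h)·a and (id_H ⊗ ε_A)(ζ(a ⊗ h)) = ε_A(a)·h. -/
import Mathlib

open TensorProduct

noncomputable section

universe u

variable {k A H X : Type u} [Field k]
  [Ring A] [Ring H] [Ring X]
  [Bialgebra k A] [Bialgebra k H] [Bialgebra k X]

/-- ζ := (p_H ⊗ p_A) ∘ Δ_X ∘ ξ⁻¹ : A ⊗ H → H ⊗ A. -/
def zetaC (pA : X →ₐc[k] A) (pH : X →ₐc[k] H) (ξ : X ≃ₗ[k] A ⊗[k] H) :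
    A ⊗[k] H →ₗ[k] H ⊗[k] A :=
  TensorProduct.map (pH : X →ₗ[k] H) (pA : X →ₗ[k] A) ∘ₗ
    (Coalgebra.comul : X →ₗ[k] X ⊗[k] X) ∘ₗ ξ.symm.toLinearMap

lemma aux_left {B C : Type u} [Ring B] [Ring C] [Bialgebra k B] [Bialgebra k C]
    (f : X →ₐc[k] B) (g : X →ₐc[k] C) (y : X) :
    TensorProduct.lid k C (TensorProduct.map (Coalgebra.counit ∘ₗ (f : X →ₗ[k] B))
      (g : X →ₗ[k] C) (Coalgebra.comul y)) = g y := by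
  have hcf : Coalgebra.counit ∘ₗ (f : X →ₗ[k] B) = Coalgebra.counit :=
    CoalgHomClass.counit_comp f
  rw [hcf, ← LinearMap.lTensor_comp_rTensor (f := (Coalgebra.counit : X →ₗ[k] k))
    (g := (g : X →ₗ[k] C))]
  rw [LinearMap.comp_apply, Coalgebra.rTensor_counit_comul]
  simp

lemma aux_right {B C : Type u} [Ring B] [Ring C] [Bialgebra k B] [Bialgebra k C]
    (f : X →ₐc[k] B) (g : X →ₐc[k] C) (y : X) :
    TensorProduct.rid k B (TensorProduct.map (f : X →ₗ[k] B)
      (Coalgebra.counit ∘ₗ (g : X →ₗ[k] C)) (Coalgebra.comul y)) = f y := by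
  have hcg : Coalgebra.counit ∘ₗ (g : X →ₗ[k] C) = Coalgebra.counit :=
    CoalgHomClass.counit_comp g
  rw [hcg, ← LinearMap.rTensor_comp_lTensor (f := (f : X →ₗ[k] B))
    (g := (Coalgebra.counit : X →ₗ[k] k))]
  rw [LinearMap.comp_apply, Coalgebra.lTensor_counit_comul]
  simp

/-- counit conditions for ζ:
(ε_H ⊗ id_A)(ζ(a ⊗ h)) = ε_H(h)·a and (id_H ⊗ ε_A)(ζ(a ⊗ h)) = ε_A(a)·h. -/
theorem zetaC_counit (pA : X →ₐc[k] A) (pH : X →ₐc[k] H)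
    (ξ : X ≃ₗ[k] A ⊗[k] H)
    (hξ : ∀ x : X, ξ x = TensorProduct.map (pA : X →ₗ[k] A) (pH : X →ₗ[k] H)
      (Coalgebra.comul x)) :
    ∀ (a : A) (h : H),
      TensorProduct.lid k A
          (TensorProduct.map (Coalgebra.counit : H →ₗ[k] k) LinearMap.id
            (zetaC pA pH ξ (a ⊗ₜ[k] h)))
        = Coalgebra.counit (R := k) h • a ∧
      TensorProduct.rid k H
          (TensorProduct.map LinearMap.id (Coalgebra.counit : A →ₗ[k] k)
            (zetaC pA pH ξ (a ⊗ₜ[k] h)))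
        = Coalgebra.counit (R := k) a • h := by
  intro a h
  set x := ξ.symm (a ⊗ₜ[k] h) with hxdef
  have hx : TensorProduct.map (pA : X →ₗ[k] A) (pH : X →ₗ[k] H) (Coalgebra.comul x)
      = a ⊗ₜ[k] h := by
    rw [← hξ x, hxdef, ξ.apply_symm_apply]
  have hpAx : pA x = Coalgebra.counit (R := k) h • a := by
    have := congrArg (fun t => TensorProduct.rid k A
      (TensorProduct.map (LinearMap.id (R := k) (M := A)) (Coalgebra.counit (R := k)) t)) hx
    simp only [TensorProduct.map_tmul, TensorProduct.rid_tmul, LinearMap.id_coe, id_eq] at this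
    rw [← this]
    have := aux_right (k := k) pA pH x
    rw [← this]
    congr 1
    rw [← LinearMap.comp_apply, ← LinearMap.comp_apply, ← TensorProduct.map_comp]
    simp
  have hpHx : pH x = Coalgebra.counit (R := k) a • h := by
    have := congrArg (fun t => TensorProduct.lid k H
      (TensorProduct.map (Coalgebra.counit (R := k)) (LinearMap.id (R := k) (M := H)) t)) hx
    simp only [TensorProduct.map_tmul, TensorProduct.lid_tmul, LinearMap.id_coe, id_eq] at this
    rw [← this]
    have := aux_left (k := k) pA pH x
    rw [← this]
    congr 1
    rw [← LinearMap.comp_apply, ← LinearMap.comp_apply, ← TensorProduct.map_comp]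
    simp
  constructor
  · rw [← hpAx]
    have h1 : TensorProduct.map ((Coalgebra.counit : H →ₗ[k] k)) (LinearMap.id (R := k) (M := A))
        (zetaC pA pH ξ (a ⊗ₜ[k] h))
        = TensorProduct.map (Coalgebra.counit ∘ₗ (pH : X →ₗ[k] H)) (pA : X →ₗ[k] A)
          (Coalgebra.comul x) := by
      simp only [zetaC, LinearMap.comp_apply, LinearEquiv.coe_coe, ← hxdef,
        ← TensorProduct.map_comp, LinearMap.id_comp]
      rw [← LinearMap.comp_apply, ← TensorProduct.map_comp, LinearMap.id_comp]
    rw [h1, aux_left (k := k) pH pA x]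
  · rw [← hpHx]
    have h1 : TensorProduct.map (LinearMap.id (R := k) (M := H)) ((Coalgebra.counit : A →ₗ[k] k))
        (zetaC pA pH ξ (a ⊗ₜ[k] h))
        = TensorProduct.map (pH : X →ₗ[k] H) (Coalgebra.counit ∘ₗ (pA : X →ₗ[k] A))
          (Coalgebra.comul x) := by
      simp only [zetaC, LinearMap.comp_apply, LinearEquiv.coe_coe, ← hxdef,
        ← TensorProduct.map_comp, LinearMap.id_comp]
      rw [← LinearMap.comp_apply, ← TensorProduct.map_comp, LinearMap.id_comp]
    rw [h1, aux_right (k := k) pH pA x]
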